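/- The quotient algebra barS^p = S^p/hatS^p is a cellular algebra with cellular basis barZ^p = {barφ_{ST} : S, T ∈ T_0^p(λ), λ ∈ Λ^+}: (i) the map barφ_{ST} ↦ barφ_{TS} extends to an R-algebra anti-automorphism * of barS^p; (ii) for every λ ∈ Λ^+, every S, T ∈ T_0^p(λ) and every barφ ∈ barS^p one has barφ_{ST} · barφ ≡ Σ_{T' ∈ T_0^p(λ)} r_{T'} barφ_{ST'} mod (barS^p)^{∨λ}, where r_{T'} ∈ R depends on λ, T and barφ but not on S, and (barS^p)^{∨λ} is the R-span of the barφ_{S'T'} with S', T' ∈ T_0^p(λ') for λ' ⊳ λ. -/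

import Mathlib

/-!
Common framework for the formalization of results of Shoji–Wada,
"Cyclotomic q-Schur algebras associated to the Ariki-Koike algebra".
-/

open scoped BigOperators TensorProduct
open MulOpposite

noncomputable section

/-! ## Multicompositions -/

/-- An `r`-multicomposition of `n`, whose `k`-th component is a composition
of length `≤ m k`. -/
structure MultiComp (n r : ℕ) (m : Fin r → ℕ) where
  part : (k : Fin r) → Fin (m k) → ℕ
  sum_eq : (∑ k, ∑ i, part k i) = n

namespace MultiComp

variable {n r : ℕ} {m : Fin r → ℕ}

theorem part_injective : Function.Injective (part : MultiComp n r m → _) := by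
  rintro ⟨a, _⟩ ⟨b, _⟩ h
  simpa using h

instance : DecidableEq (MultiComp n r m) := fun a b =>
  decidable_of_iff (a.part = b.part) part_injective.eq_iff

theorem part_le_n (lam : MultiComp n r m) (k : Fin r) (i : Fin (m k)) :
    lam.part k i ≤ n := by
  calc lam.part k i ≤ ∑ i, lam.part k i :=
        Finset.single_le_sum (fun _ _ => Nat.zero_le _) (Finset.mem_univ i)
    _ ≤ ∑ k, ∑ i, lam.part k i :=
        Finset.single_le_sum (f := fun k => ∑ i, lam.part k i)
          (fun _ _ => Nat.zero_le _) (Finset.mem_univ k)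
    _ = n := lam.sum_eq

instance : Fintype (MultiComp n r m) :=
  Fintype.ofInjective
    (fun lam (k : Fin r) (i : Fin (m k)) =>
      (⟨lam.part k i, Nat.lt_succ_of_le (part_le_n lam k i)⟩ : Fin (n + 1)))
    (fun a b h => part_injective (by
      funext k i
      exact congrArg Fin.val (congrFun (congrFun h k) i)))

/-- an `r`-multipartition: every component is weakly decreasing -/
def IsPartition (lam : MultiComp n r m) : Prop :=
  ∀ (k : Fin r) (i j : Fin (m k)), i ≤ j → lam.part k j ≤ lam.part k i

instance (lam : MultiComp n r m) : Decidable lam.IsPartition := by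
  unfold IsPartition; infer_instance

/-- the size `|λ^{(k)}|` of the `k`-th component -/
def compSize (lam : MultiComp n r m) (k : Fin r) : ℕ := ∑ i, lam.part k i

/-- the dominance order `λ ⊵ μ` on multicompositions -/
def Dominates (lam mu : MultiComp n r m) : Prop :=
  ∀ (k : Fin r) (i : Fin (m k)),
    ((∑ c ∈ Finset.univ.filter fun c => c < k, mu.compSize c) +
        ∑ j ∈ Finset.univ.filter fun j => j ≤ i, mu.part k j) ≤
      (∑ c ∈ Finset.univ.filter fun c => c < k, lam.compSize c) +
        ∑ j ∈ Finset.univ.filter fun j => j ≤ i, lam.part k j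

/-- the strict dominance order `λ ⊳ μ` -/
def SDominates (lam mu : MultiComp n r m) : Prop :=
  Dominates lam mu ∧ lam ≠ mu

end MultiComp

/-- `Λ` is a saturated set of multicompositions: it contains every multipartition
dominating one of its members. -/
def Saturated {n r : ℕ} {m : Fin r → ℕ} (Λ : Finset (MultiComp n r m)) : Prop :=
  ∀ lam : MultiComp n r m, lam.IsPartition →
    (∃ mu ∈ Λ, MultiComp.Dominates lam mu) → lam ∈ Λ

/-! ## Tableaux -/

/-- the set of entries `(i,k)` (row `i` of component `k`) for tableaux -/
abbrev MCEntry (r : ℕ) (m : Fin r → ℕ) := Σ k : Fin r, Fin (m k)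

/-- the total order on entries: `(i₁,k₁) ≤ (i₂,k₂)` iff `k₁ < k₂`, or `k₁ = k₂` and
`i₁ ≤ i₂`. -/
def entryLE {r : ℕ} {m : Fin r → ℕ} (a b : MCEntry r m) : Prop :=
  a.1 < b.1 ∨ (a.1 = b.1 ∧ (a.2 : ℕ) ≤ (b.2 : ℕ))

/-- the associated strict order on entries -/
def entryLT {r : ℕ} {m : Fin r → ℕ} (a b : MCEntry r m) : Prop :=
  a.1 < b.1 ∨ (a.1 = b.1 ∧ (a.2 : ℕ) < (b.2 : ℕ))

/-- the cells `(k, i, j)` (component `k`, row `i`, column `j`) of the Young diagram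
of a multicomposition -/
abbrev MultiComp.Cell {n r : ℕ} {m : Fin r → ℕ} (lam : MultiComp n r m) :=
  Σ (k : Fin r) (i : Fin (m k)), Fin (lam.part k i)

/-- Semistandard tableaux of shape `lam` and type `mu` in the sense of
Dipper–James–Mathas: rows weakly increase, columns strictly increase, the entries of
the `k`-th component have second coordinate `≥ k`, and for each entry `(i,k)` the
number of cells carrying it equals `mu.part k i`. -/
structure SSTab {n r : ℕ} {m : Fin r → ℕ} (lam mu : MultiComp n r m) where
  entry : lam.Cell → MCEntry r m
  rowWeak : ∀ (k : Fin r) (i : Fin (m k)) (j j' : Fin (lam.part k i)),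
    j ≤ j' → entryLE (entry ⟨k, i, j⟩) (entry ⟨k, i, j'⟩)
  colStrict : ∀ (k : Fin r) (i i' : Fin (m k)) (j : ℕ)
    (hj : j < lam.part k i) (hj' : j < lam.part k i'), i < i' →
    entryLT (entry ⟨k, i, ⟨j, hj⟩⟩) (entry ⟨k, i', ⟨j, hj'⟩⟩)
  compLE : ∀ c : lam.Cell, c.1 ≤ (entry c).1
  typeCount : ∀ e : MCEntry r m,
    mu.part e.1 e.2 = Fintype.card {c : lam.Cell // entry c = e}

namespace SSTab

variable {n r : ℕ} {m : Fin r → ℕ} {lam mu : MultiComp n r m}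

theorem entry_injective : Function.Injective (entry : SSTab lam mu → _) := by
  rintro ⟨a, _, _, _, _⟩ ⟨b, _, _, _, _⟩ h
  simpa using h

instance : Fintype (SSTab lam mu) := Fintype.ofInjective entry entry_injective

instance : DecidableEq (SSTab lam mu) := fun a b =>
  decidable_of_iff (a.entry = b.entry) entry_injective.eq_iff

end SSTab

/-- Standard tableaux of shape `lam`: bijective fillings of the diagram by the
letters `1, …, n`, increasing along rows and down columns. -/
structure StdTab {n r : ℕ} {m : Fin r → ℕ} (lam : MultiComp n r m) where
  entry : lam.Cell → Fin n
  bij : Function.Bijective entry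
  rowStrict : ∀ (k : Fin r) (i : Fin (m k)) (j j' : Fin (lam.part k i)),
    j < j' → entry ⟨k, i, j⟩ < entry ⟨k, i, j'⟩
  colStrict : ∀ (k : Fin r) (i i' : Fin (m k)) (j : ℕ)
    (hj : j < lam.part k i) (hj' : j < lam.part k i'), i < i' →
    entry ⟨k, i, ⟨j, hj⟩⟩ < entry ⟨k, i', ⟨j, hj'⟩⟩

namespace StdTab

variable {n r : ℕ} {m : Fin r → ℕ} {lam : MultiComp n r m}

theorem entry_injective : Function.Injective (entry : StdTab lam → _) := by
  rintro ⟨a, _, _, _⟩ ⟨b, _, _, _⟩ h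
  simpa using h

instance : Fintype (StdTab lam) := Fintype.ofInjective entry entry_injective

end StdTab
/-! ## The block structure attached to `p = (r₁, …, r_g)` -/

/-- componentwise comparison of vectors in `ℤ_{≥0}^g` -/
def vecLE {g : ℕ} (f h : Fin g → ℕ) : Prop := ∀ b, f b ≤ h b

instance {g : ℕ} (f h : Fin g → ℕ) : Decidable (vecLE f h) := by
  unfold vecLE; infer_instance

/-- strict componentwise comparison: `f ≤ h` componentwise and `f ≠ h` -/
def vecLT {g : ℕ} (f h : Fin g → ℕ) : Prop := vecLE f h ∧ f ≠ h

instance {g : ℕ} (f h : Fin g → ℕ) : Decidable (vecLT f h) := by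
  unfold vecLT; infer_instance

/-- The datum of `p = (r₁, …, r_g)`, encoded by the map sending a component
`k ∈ {1, …, r}` to its block: the fibers of `π` are the intervals
`{p_b + 1, …, p_b + r_b}`, of sizes `r_b > 0`. -/
structure BlockCtx (r g : ℕ) where
  π : Fin r → Fin g
  mono : Monotone π
  surj : Function.Surjective π

namespace BlockCtx

variable {r g : ℕ} (P : BlockCtx r g) {n : ℕ} {m : Fin r → ℕ}

/-- `α_p(μ) = (n₁, …, n_g)`, `n_b = |μ^{[b]}|` -/
def alphaP (mu : MultiComp n r m) : Fin g → ℕ := fun b =>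
  ∑ k ∈ Finset.univ.filter fun k => P.π k = b, mu.compSize k

/-- `a_p(μ) = (a₁, …, a_g)`, `a_b = n₁ + ⋯ + n_{b-1}` -/
def aP (mu : MultiComp n r m) : Fin g → ℕ := fun b =>
  ∑ k ∈ Finset.univ.filter fun k => P.π k < b, mu.compSize k

/-- `r_b`, the number of components in block `b` -/
def rblk (b : Fin g) : ℕ := (Finset.univ.filter fun k => P.π k = b).card

/-- the components in block `b`, listed in increasing order -/
def blkEquiv (b : Fin g) :
    Fin (P.rblk b) ≃o {x // x ∈ Finset.univ.filter fun k => P.π k = b} :=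
  (Finset.univ.filter fun k => P.π k = b).orderIsoOfFin rfl

/-- `m^{[b]}`, the row bounds of block `b` -/
def mblk (m : Fin r → ℕ) (b : Fin g) : Fin (P.rblk b) → ℕ :=
  fun i => m ((P.blkEquiv b i : {x // x ∈ Finset.univ.filter fun k => P.π k = b}) : Fin r)

/-- the block component `μ^{[b]}` of a multicomposition, an `r_b`-multicomposition
of `n_b = α_p(μ)_b` -/
def restrictTo (mu : MultiComp n r m) (b : Fin g) (nb : ℕ)
    (h : P.alphaP mu b = nb) : MultiComp nb (P.rblk b) (P.mblk m b) where
  part := fun k i => mu.part ((P.blkEquiv b k :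
    {x // x ∈ Finset.univ.filter fun k => P.π k = b}) : Fin r) i
  sum_eq := by
    subst h
    calc (∑ k : Fin (P.rblk b), ∑ i, mu.part ((P.blkEquiv b k :
            {x // x ∈ Finset.univ.filter fun k => P.π k = b}) : Fin r) i)
        = ∑ x : {x // x ∈ Finset.univ.filter fun k => P.π k = b},
            mu.compSize (x : Fin r) :=
          Fintype.sum_equiv (P.blkEquiv b).toEquiv _ _ (fun _ => rfl)
      _ = ∑ k ∈ Finset.univ.filter fun k => P.π k = b, mu.compSize k :=
          Finset.sum_coe_sort _ _
      _ = P.alphaP mu b := rfl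

theorem restrictTo_isPartition (mu : MultiComp n r m) (hmu : mu.IsPartition)
    (b : Fin g) (nb : ℕ) (h : P.alphaP mu b = nb) :
    (P.restrictTo mu b nb h).IsPartition :=
  fun k i j hij => hmu _ i j hij

/-- the largest component index in block `b` (that is, `p_b + r_b`) -/
def blockLast (b : Fin g) : Fin r :=
  (Finset.univ.filter fun k => P.π k = b).max' (by
    obtain ⟨k, hk⟩ := P.surj b
    exact ⟨k, Finset.mem_filter.2 ⟨Finset.mem_univ _, hk⟩⟩)

end BlockCtx
/-! ## The cyclotomic q-Schur algebra with its Dipper–James–Mathas cellular basis -/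

/-- the multicompositions belonging to `Λ` -/
abbrev LamS {n r : ℕ} {m : Fin r → ℕ} (Λ : Finset (MultiComp n r m)) := {x // x ∈ Λ}

/-- `Λ⁺`, the multipartitions belonging to `Λ` -/
abbrev LamP {n r : ℕ} {m : Fin r → ℕ} (Λ : Finset (MultiComp n r m)) :=
  {x : MultiComp n r m // x ∈ Λ ∧ x.IsPartition}

/-- the index set of the Dipper–James–Mathas cellular basis
`{φ_{S,T} : S ∈ T₀(λ,μ), T ∈ T₀(λ,ν), λ ∈ Λ⁺, μ, ν ∈ Λ}` -/
abbrev DJMIndex {n r : ℕ} {m : Fin r → ℕ} (Λ : Finset (MultiComp n r m)) :=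
  Σ (lam : LamP Λ) (mu : LamS Λ) (nu : LamS Λ), SSTab lam.1 mu.1 × SSTab lam.1 nu.1

/-- Abstract datum of the cyclotomic q-Schur algebra `S(Λ) = End_H(⊕_{μ∈Λ} M^μ)`
together with its Dipper–James–Mathas cellular basis `φ_{S,T}`
(`bas ⟨λ, μ, ν, (S, T)⟩` is the basis element `φ_{S,T} ∈ Hom_H(M^ν, M^μ)` for
`S ∈ T₀(λ,μ)`, `T ∈ T₀(λ,ν)`), with its cellular anti-automorphism `*`
(`astar`), and the orthogonal idempotents `φ_μ = id_{M^μ}` (`phiId`). -/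
structure SchurAlgebra (R : Type) [CommRing R] {n r : ℕ} {m : Fin r → ℕ}
    (Λ : Finset (MultiComp n r m)) where
  carrier : Type
  [ringI : Ring carrier]
  [algI : Algebra R carrier]
  bas : Module.Basis (DJMIndex Λ) R carrier
  astar : carrier →ₗ[R] carrier
  astar_mul : ∀ x y : carrier, astar (x * y) = astar y * astar x
  astar_bas : ∀ (lam : LamP Λ) (mu nu : LamS Λ)
    (S : SSTab lam.1 mu.1) (T : SSTab lam.1 nu.1),
    astar (bas ⟨lam, mu, nu, (S, T)⟩) = bas ⟨lam, nu, mu, (T, S)⟩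
  phiId : LamS Λ → carrier
  phiId_sum : ∑ mu : LamS Λ, phiId mu = 1
  phiId_mul : ∀ mu nu : LamS Λ, phiId mu * phiId nu = if mu = nu then phiId mu else 0
  phiId_mul_bas : ∀ (lam : LamP Λ) (mu nu : LamS Λ) (S : SSTab lam.1 mu.1)
    (T : SSTab lam.1 nu.1) (rho : LamS Λ),
    phiId rho * bas ⟨lam, mu, nu, (S, T)⟩ =
      if rho = mu then bas ⟨lam, mu, nu, (S, T)⟩ else 0
  bas_mul_phiId : ∀ (lam : LamP Λ) (mu nu : LamS Λ) (S : SSTab lam.1 mu.1)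
    (T : SSTab lam.1 nu.1) (rho : LamS Λ),
    bas ⟨lam, mu, nu, (S, T)⟩ * phiId rho =
      if rho = nu then bas ⟨lam, mu, nu, (S, T)⟩ else 0
  cellular : ∀ (a : carrier) (lam : LamP Λ) (mu : LamS Λ) (S : SSTab lam.1 mu.1),
    ∃ c : (Σ mu' : LamS Λ, SSTab lam.1 mu'.1) → R,
      ∀ (nu : LamS Λ) (T : SSTab lam.1 nu.1),
        a * bas ⟨lam, mu, nu, (S, T)⟩ -
            ∑ x : Σ mu' : LamS Λ, SSTab lam.1 mu'.1,
              c x • bas ⟨lam, x.1, nu, (x.2, T)⟩ ∈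
          Submodule.span R
            {y : carrier | ∃ (lam' : LamP Λ) (mu' nu' : LamS Λ)
              (S' : SSTab lam'.1 mu'.1) (T' : SSTab lam'.1 nu'.1),
              MultiComp.SDominates lam'.1 lam.1 ∧
              y = bas ⟨lam', mu', nu', (S', T')⟩}

namespace SchurAlgebra

variable {R : Type} [CommRing R] {n r : ℕ} {m : Fin r → ℕ}
variable {Λ : Finset (MultiComp n r m)}

instance (SA : SchurAlgebra R Λ) : Ring SA.carrier := SA.ringI
instance (SA : SchurAlgebra R Λ) : Algebra R SA.carrier := SA.algI

/-- the two-sided ideal `S(Λ)^{∨λ}`, spanned by the `φ_{S,T}` of shape strictly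
dominating `λ` -/
def SVee (SA : SchurAlgebra R Λ) (lam : LamP Λ) : Submodule R SA.carrier :=
  Submodule.span R
    {y : SA.carrier | ∃ (lam' : LamP Λ) (mu' nu' : LamS Λ)
      (S' : SSTab lam'.1 mu'.1) (T' : SSTab lam'.1 nu'.1),
      MultiComp.SDominates lam'.1 lam.1 ∧ y = SA.bas ⟨lam', mu', nu', (S', T')⟩}

end SchurAlgebra

/-! ## The parabolic subalgebra `S^p` and its combinatorics -/

section PLayer

variable {R : Type} [CommRing R] {n r g : ℕ} {m : Fin r → ℕ}
variable {Λ : Finset (MultiComp n r m)}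

/-- a semistandard tableau of shape `λ` together with its type `μ`,
i.e. an element of `T₀(λ) = ⋃_{μ ∈ Λ} T₀(λ,μ)` -/
abbrev TabOf (Λ : Finset (MultiComp n r m)) (lam : LamP Λ) :=
  Σ mu : LamS Λ, SSTab lam.1 mu.1

/-- the condition defining `T₀^p(λ,μ) ⊆ T₀(λ,μ)`: `a_p(λ) = a_p(μ)` -/
def pCond (P : BlockCtx r g) (lam : LamP Λ) (x : TabOf Λ lam) : Prop :=
  P.aP x.1.1 = P.aP lam.1

instance (P : BlockCtx r g) (lam : LamP Λ) (x : TabOf Λ lam) :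
    Decidable (pCond P lam x) := by
  unfold pCond; infer_instance

/-- `T₀^p(λ)`, the tableaux whose type has the same `a_p` as the shape -/
abbrev PTab (P : BlockCtx r g) (lam : LamP Λ) := {x : TabOf Λ lam // pCond P lam x}

/-- `x` is the canonical tableau `T^λ = λ(t^λ)` of shape and type `λ` -/
def IsCanonical (lam : LamP Λ) (x : TabOf Λ lam) : Prop :=
  x.1.1 = lam.1 ∧ ∀ c : lam.1.Cell, x.2.entry c = ⟨c.1, c.2.1⟩

namespace SchurAlgebra

/-- the subset `Z^p` of the cellular basis: those `φ_{S,T}` with `S ∈ T₀(λ,μ)`,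
`T ∈ T₀(λ,ν)` such that `a_p(λ) > a_p(μ)` whenever `α_p(μ) ≠ α_p(ν)` -/
def ZpSet (SA : SchurAlgebra R Λ) (P : BlockCtx r g) : Set SA.carrier :=
  {x | ∃ (lam : LamP Λ) (mu nu : LamS Λ) (S : SSTab lam.1 mu.1) (T : SSTab lam.1 nu.1),
    (P.alphaP mu.1 ≠ P.alphaP nu.1 → vecLT (P.aP mu.1) (P.aP lam.1)) ∧
    x = SA.bas ⟨lam, mu, nu, (S, T)⟩}

/-- the subset `Z^p \ {φ_{S,T} : S, T ∈ T₀^p(λ)}` spanning the two-sided ideal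
`\hat S^p` of `S^p` -/
def ZpHatSet (SA : SchurAlgebra R Λ) (P : BlockCtx r g) : Set SA.carrier :=
  {x | ∃ (lam : LamP Λ) (mu nu : LamS Λ) (S : SSTab lam.1 mu.1) (T : SSTab lam.1 nu.1),
    (P.alphaP mu.1 ≠ P.alphaP nu.1 → vecLT (P.aP mu.1) (P.aP lam.1)) ∧
    ¬(P.aP mu.1 = P.aP lam.1 ∧ P.aP nu.1 = P.aP lam.1) ∧
    x = SA.bas ⟨lam, mu, nu, (S, T)⟩}

end SchurAlgebra

/-- the index set `Σ^p ⊆ Λ⁺ × {0,1}`, where `(λ,1)` is kept only if there exists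
`μ ∈ Λ` with `a_p(λ) > a_p(μ)` and `T₀(λ,μ) ≠ ∅` -/
def SigmaPIdx (Λ : Finset (MultiComp n r m)) (P : BlockCtx r g) :=
  {e : LamP Λ × Bool // e.2 = true →
    ∃ mu : LamS Λ, vecLT (P.aP mu.1) (P.aP e.1.1) ∧ Nonempty (SSTab e.1.1 mu.1)}

/-- the partial order on `Σ^p`: `(λ₁,ε₁) > (λ₂,ε₂)` iff `λ₁ ⊳ λ₂`, or `λ₁ = λ₂`
and `ε₁ > ε₂` -/
def sigmaGT (P : BlockCtx r g) (e f : SigmaPIdx Λ P) : Prop :=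
  MultiComp.SDominates e.1.1.1 f.1.1.1 ∨
    (e.1.1 = f.1.1 ∧ e.1.2 = true ∧ f.1.2 = false)

/-- the element `(λ, 0)` of `Σ^p` -/
def eZero (P : BlockCtx r g) (lam : LamP Λ) : SigmaPIdx Λ P :=
  ⟨(lam, false), fun h => (Bool.false_ne_true h).elim⟩

/-- the index set `I^p(ε)`: `T₀^p(λ)` for `ε = (λ,0)`, and
`⋃ {T₀(λ,μ) : a_p(λ) > a_p(μ)}` for `ε = (λ,1)` -/
def pIp (P : BlockCtx r g) (e : SigmaPIdx Λ P) : Set (TabOf Λ e.1.1) :=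
  {x | (e.1.2 = true ∧ vecLT (P.aP x.1.1) (P.aP e.1.1.1)) ∨
       (e.1.2 = false ∧ pCond P e.1.1 x)}

/-- the index set `J^p(ε)`: `T₀^p(λ)` for `ε = (λ,0)`, and `T₀(λ)` for `ε = (λ,1)` -/
def pJp (P : BlockCtx r g) (e : SigmaPIdx Λ P) : Set (TabOf Λ e.1.1) :=
  {x | e.1.2 = true ∨ pCond P e.1.1 x}

instance (P : BlockCtx r g) (e : SigmaPIdx Λ P) :
    DecidablePred (· ∈ pIp (Λ := Λ) P e) := fun x =>
  decidable_of_iff ((e.1.2 = true ∧ vecLT (P.aP x.1.1) (P.aP e.1.1.1)) ∨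
    (e.1.2 = false ∧ pCond P e.1.1 x)) Iff.rfl

instance (P : BlockCtx r g) (e : SigmaPIdx Λ P) :
    DecidablePred (· ∈ pJp (Λ := Λ) P e) := fun x =>
  decidable_of_iff (e.1.2 = true ∨ pCond P e.1.1 x) Iff.rfl

namespace SchurAlgebra

/-- the set `Z^p(ε) = {φ_{S,T} : S ∈ I^p(ε), T ∈ J^p(ε)}` -/
def ZpAt (SA : SchurAlgebra R Λ) (P : BlockCtx r g) (e : SigmaPIdx Λ P) :
    Set SA.carrier :=
  {x | ∃ S ∈ pIp P e, ∃ T ∈ pJp P e, x = SA.bas ⟨e.1.1, S.1, T.1, (S.2, T.2)⟩}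

/-- the ideal `(S^p)^{∨ε}`, spanned by the `Z^p(ε')` for `ε' > ε` -/
def SpVee (SA : SchurAlgebra R Λ) (P : BlockCtx r g) (e : SigmaPIdx Λ P) :
    Submodule R SA.carrier :=
  Submodule.span R (⋃ e' : {f : SigmaPIdx Λ P // sigmaGT P f e}, SA.ZpAt P e'.1)

end SchurAlgebra

end PLayer
/-! ## Based right modules and composition multiplicities -/

/-- a right `A`-module which is free as an `R`-module with a distinguished basis
indexed by `ι`; right `A`-modules are treated as left `Aᵐᵒᵖ`-modules -/
structure BasedRightModule (R : Type) [CommRing R] (A : Type) [Ring A]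
    [Algebra R A] (ι : Type) where
  M : Type
  [abGrp : AddCommGroup M]
  [modR : Module R M]
  [modA : Module Aᵐᵒᵖ M]
  [tower : IsScalarTower R Aᵐᵒᵖ M]
  bas : Module.Basis ι R M

namespace BasedRightModule

variable {R : Type} [CommRing R] {A : Type} [Ring A] [Algebra R A] {ι : Type}

instance (X : BasedRightModule R A ι) : AddCommGroup X.M := X.abGrp
instance (X : BasedRightModule R A ι) : Module R X.M := X.modR
instance (X : BasedRightModule R A ι) : Module Aᵐᵒᵖ X.M := X.modA
instance (X : BasedRightModule R A ι) : IsScalarTower R Aᵐᵒᵖ X.M := X.tower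

end BasedRightModule

/-- `N` is the radical of the bilinear form on the based module `X` whose Gram
matrix in the distinguished basis is `f` -/
def IsFormRadical {R : Type} [CommRing R] {A : Type} [Ring A] [Algebra R A]
    {ι : Type} [Fintype ι] (X : BasedRightModule R A ι) (f : ι → ι → R)
    (N : Submodule Aᵐᵒᵖ X.M) : Prop :=
  ∀ x : X.M, x ∈ N ↔ ∀ t : ι, (∑ s : ι, X.bas.repr x s * f s t) = 0

open Classical in
/-- the number of factors of the composition series `s` isomorphic to `L`: the
multiplicity `[M : L]` when `s` runs from `⊥` to `⊤` -/
noncomputable def factorMult {A : Type} [Ring A] {M : Type} [AddCommGroup M]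
    [Module A M] (s : CompositionSeries (Submodule A M)) (L : Type)
    [AddCommGroup L] [Module A L] : ℕ :=
  (Finset.univ.filter fun i : Fin s.length =>
    Nonempty ((↥(s i.succ) ⧸ Submodule.comap (s i.succ).subtype (s i.castSucc))
      ≃ₗ[A] L)).card

/-- a composition series of the full module: from `⊥` to `⊤` -/
def IsFullSeries {A : Type} [Ring A] {M : Type} [AddCommGroup M] [Module A M]
    (s : CompositionSeries (Submodule A M)) : Prop :=
  s.head = ⊥ ∧ s.last = ⊤
/-! ## The quotient algebra `\bar S^p` -/

section BarLayer

variable {R : Type} [CommRing R] {n r g : ℕ} {m : Fin r → ℕ}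
variable {Λ : Finset (MultiComp n r m)}

/-- Abstract datum of the quotient algebra `\bar S^p = S^p / \hat S^p`:
an `R`-algebra `B` together with the surjective projection `proj : S^p → B`,
whose kernel is the span of `Z^p \ {φ_{S,T} : S, T ∈ T₀^p(λ)}`, and the images
`\barφ_{S,T}` (`barphi`) of the basis elements, which form an `R`-basis of `B`. -/
structure BarSchurAlgebra {R : Type} [CommRing R] {n r : ℕ} {m : Fin r → ℕ}
    {Λ : Finset (MultiComp n r m)} {g : ℕ} (SA : SchurAlgebra R Λ)
    (P : BlockCtx r g) (Sp : Subalgebra R SA.carrier) where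
  B : Type
  [ringB : Ring B]
  [algB : Algebra R B]
  proj : ↥Sp →ₐ[R] B
  surj : Function.Surjective proj
  barphi : (lam : LamP Λ) → PTab P lam → PTab P lam → B
  bbas : Module.Basis (Σ lam : LamP Λ, PTab P lam × PTab P lam) R B
  bbas_eq : ∀ (lam : LamP Λ) (S T : PTab P lam), bbas ⟨lam, (S, T)⟩ = barphi lam S T
  proj_bas : ∀ (lam : LamP Λ) (mu nu : LamS Λ) (S : SSTab lam.1 mu.1)
    (T : SSTab lam.1 nu.1) (x : ↥Sp),
    (x : SA.carrier) = SA.bas ⟨lam, mu, nu, (S, T)⟩ →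
    proj x = if h : pCond P lam ⟨mu, S⟩ ∧ pCond P lam ⟨nu, T⟩
      then barphi lam ⟨⟨mu, S⟩, h.1⟩ ⟨⟨nu, T⟩, h.2⟩ else 0
  ker_char : ∀ x : ↥Sp, proj x = 0 ↔ (x : SA.carrier) ∈
    Submodule.span R (SA.ZpHatSet P)

namespace BarSchurAlgebra

variable {SA : SchurAlgebra R Λ} {P : BlockCtx r g} {Sp : Subalgebra R SA.carrier}

instance (BA : BarSchurAlgebra SA P Sp) : Ring BA.B := BA.ringB
instance (BA : BarSchurAlgebra SA P Sp) : Algebra R BA.B := BA.algB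

/-- the two-sided ideal `(\bar S^p)^{∨λ}`, spanned by the `\barφ_{S,T}` of shape
strictly dominating `λ` -/
def BarVee (BA : BarSchurAlgebra SA P Sp) (lam : LamP Λ) : Submodule R BA.B :=
  Submodule.span R {y : BA.B | ∃ (lam' : LamP Λ) (S T : PTab P lam'),
    MultiComp.SDominates lam'.1 lam.1 ∧ y = BA.barphi lam' S T}

end BarSchurAlgebra

/-! ## Characterizations of the various Weyl modules -/

namespace SchurAlgebra

/-- `W` is the Weyl module `W^λ` of `S(Λ)`: its basis `{φ_T}` is indexed by
`T₀(λ)` and the right action is the one inherited from multiplication in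
`S(Λ)` modulo `S(Λ)^{∨λ}`. -/
def IsWeylModule (SA : SchurAlgebra R Λ) (lam : LamP Λ)
    (W : BasedRightModule R SA.carrier (TabOf Λ lam)) : Prop :=
  ∀ (S T : TabOf Λ lam) (a : SA.carrier),
    SA.bas ⟨lam, S.1, T.1, (S.2, T.2)⟩ * a -
        ∑ T' : TabOf Λ lam, (W.bas.repr (MulOpposite.op a • W.bas T) T') •
          SA.bas ⟨lam, S.1, T'.1, (S.2, T'.2)⟩ ∈ SA.SVee lam

/-- `f` is the canonical bilinear form of the Weyl module `W^λ`, determined by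
`φ_{T^λ,S} φ_{T,T^λ} ≡ ⟨φ_S, φ_T⟩ φ_{T^λ,T^λ} mod S(Λ)^{∨λ}`; here `tc` is the
canonical tableau `T^λ`. -/
def IsWeylForm (SA : SchurAlgebra R Λ) (lam : LamP Λ) (tc : TabOf Λ lam)
    (f : TabOf Λ lam → TabOf Λ lam → R) : Prop :=
  ∀ S T : TabOf Λ lam,
    SA.bas ⟨lam, tc.1, S.1, (tc.2, S.2)⟩ * SA.bas ⟨lam, T.1, tc.1, (T.2, tc.2)⟩ -
      f S T • SA.bas ⟨lam, tc.1, tc.1, (tc.2, tc.2)⟩ ∈ SA.SVee lam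

/-- `Z` is the standard right `S^p`-module `Z_p^ε` attached to `ε ∈ Σ^p`: its
basis `{φ_T^ε}` is indexed by `J^p(ε)` and the right `S^p`-action is inherited
from multiplication in `S^p` modulo `(S^p)^{∨ε}`. -/
def IsZpModule (SA : SchurAlgebra R Λ) (P : BlockCtx r g)
    (Sp : Subalgebra R SA.carrier) (e : SigmaPIdx Λ P)
    (Z : BasedRightModule R ↥Sp {x : TabOf Λ e.1.1 // x ∈ pJp P e}) : Prop :=
  ∀ (S : {x : TabOf Λ e.1.1 // x ∈ pIp P e})
    (T : {x : TabOf Λ e.1.1 // x ∈ pJp P e}) (a : ↥Sp),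
    SA.bas ⟨e.1.1, S.1.1, T.1.1, (S.1.2, T.1.2)⟩ * (a : SA.carrier) -
        ∑ T' : {x : TabOf Λ e.1.1 // x ∈ pJp P e},
          (Z.bas.repr (MulOpposite.op a • Z.bas T) T') •
            SA.bas ⟨e.1.1, S.1.1, T'.1.1, (S.1.2, T'.1.2)⟩ ∈ SA.SpVee P e

/-- `f` is the canonical bilinear pairing `β_ε` between `◇Z_p^ε` and `Z_p^ε`,
determined by `φ_{U,T} φ_{S,V} ≡ β_ε(φ_S^ε, φ_T^ε) φ_{U,V} mod (S^p)^{∨ε}`. -/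
def IsBetaForm (SA : SchurAlgebra R Λ) (P : BlockCtx r g) (e : SigmaPIdx Λ P)
    (f : {x : TabOf Λ e.1.1 // x ∈ pIp P e} →
      {x : TabOf Λ e.1.1 // x ∈ pJp P e} → R) : Prop :=
  ∀ (U : {x : TabOf Λ e.1.1 // x ∈ pIp P e})
    (T : {x : TabOf Λ e.1.1 // x ∈ pJp P e})
    (S : {x : TabOf Λ e.1.1 // x ∈ pIp P e})
    (V : {x : TabOf Λ e.1.1 // x ∈ pJp P e}),
    SA.bas ⟨e.1.1, U.1.1, T.1.1, (U.1.2, T.1.2)⟩ *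
        SA.bas ⟨e.1.1, S.1.1, V.1.1, (S.1.2, V.1.2)⟩ -
      f S T • SA.bas ⟨e.1.1, U.1.1, V.1.1, (U.1.2, V.1.2)⟩ ∈ SA.SpVee P e

/-- `N` is the radical `rad Z_p^ε` of the pairing `β_ε` (with Gram matrix `f`). -/
def IsBetaRadical (SA : SchurAlgebra R Λ) (P : BlockCtx r g)
    (Sp : Subalgebra R SA.carrier) (e : SigmaPIdx Λ P)
    (Z : BasedRightModule R ↥Sp {x : TabOf Λ e.1.1 // x ∈ pJp P e})
    (f : {x : TabOf Λ e.1.1 // x ∈ pIp P e} →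
      {x : TabOf Λ e.1.1 // x ∈ pJp P e} → R)
    (N : Submodule (↥Sp)ᵐᵒᵖ Z.M) : Prop :=
  ∀ y : Z.M, y ∈ N ↔ ∀ S : {x : TabOf Λ e.1.1 // x ∈ pIp P e},
    (∑ T : {x : TabOf Λ e.1.1 // x ∈ pJp P e}, Z.bas.repr y T * f S T) = 0

end SchurAlgebra

namespace BarSchurAlgebra

variable {SA : SchurAlgebra R Λ} {P : BlockCtx r g} {Sp : Subalgebra R SA.carrier}

/-- `Z` is the Weyl (cell) module `\bar Z_p^λ` of the cellular algebra `\bar S^p`: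
its basis `{\barφ_T}` is indexed by `T₀^p(λ)` and the right action is inherited
from multiplication in `\bar S^p` modulo `(\bar S^p)^{∨λ}`. -/
def IsBarWeyl (BA : BarSchurAlgebra SA P Sp) (lam : LamP Λ)
    (Z : BasedRightModule R BA.B (PTab P lam)) : Prop :=
  ∀ (S T : PTab P lam) (b : BA.B),
    BA.barphi lam S T * b - ∑ T' : PTab P lam,
        (Z.bas.repr (MulOpposite.op b • Z.bas T) T') • BA.barphi lam S T' ∈
      BA.BarVee lam

/-- `f` is the canonical symmetric bilinear form `⟨·,·⟩_p` on `\bar Z_p^λ`,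
determined by `\barφ_{T^λ,S} \barφ_{T,T^λ} ≡ ⟨\barφ_S, \barφ_T⟩_p \barφ_{T^λ,T^λ}
mod (\bar S^p)^{∨λ}`; `tc` is the canonical tableau `T^λ`. -/
def IsBarForm (BA : BarSchurAlgebra SA P Sp) (lam : LamP Λ) (tc : PTab P lam)
    (f : PTab P lam → PTab P lam → R) : Prop :=
  ∀ S T : PTab P lam,
    BA.barphi lam tc S * BA.barphi lam T tc - f S T • BA.barphi lam tc tc ∈
      BA.BarVee lam

end BarSchurAlgebra

end BarLayer
/-! ## The Ariki–Koike algebra -/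

/-- the defining relations of the Ariki–Koike algebra `H_{n,r}` on the generators
`T_0, T_1, …, T_{n-1}` (generator `i : Fin n` is `T_i`) -/
inductive ArikiKoikeRel (R : Type) [CommRing R] (n r : ℕ) (q : Rˣ) (Q : Fin r → R) :
    FreeAlgebra R (Fin n) → FreeAlgebra R (Fin n) → Prop
  | cyclotomic (h : 0 < n) :
      ArikiKoikeRel R n r q Q
        (((List.finRange r).map fun j =>
          FreeAlgebra.ι R (⟨0, h⟩ : Fin n) - algebraMap R _ (Q j)).prod) 0
  | quadratic (i : Fin n) (hi : i.1 ≠ 0) :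
      ArikiKoikeRel R n r q Q
        ((FreeAlgebra.ι R i - algebraMap R _ (q : R)) *
          (FreeAlgebra.ι R i + algebraMap R _ ((q⁻¹ : Rˣ) : R))) 0
  | braid0 (h : 1 < n) :
      ArikiKoikeRel R n r q Q
        (FreeAlgebra.ι R (⟨0, Nat.lt_of_lt_of_le Nat.zero_lt_one h.le⟩ : Fin n) *
          FreeAlgebra.ι R (⟨1, h⟩ : Fin n) *
          FreeAlgebra.ι R (⟨0, Nat.lt_of_lt_of_le Nat.zero_lt_one h.le⟩ : Fin n) *
          FreeAlgebra.ι R (⟨1, h⟩ : Fin n))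
        (FreeAlgebra.ι R (⟨1, h⟩ : Fin n) *
          FreeAlgebra.ι R (⟨0, Nat.lt_of_lt_of_le Nat.zero_lt_one h.le⟩ : Fin n) *
          FreeAlgebra.ι R (⟨1, h⟩ : Fin n) *
          FreeAlgebra.ι R (⟨0, Nat.lt_of_lt_of_le Nat.zero_lt_one h.le⟩ : Fin n))
  | braid (i j : Fin n) (hi : i.1 ≠ 0) (hij : j.1 = i.1 + 1) :
      ArikiKoikeRel R n r q Q
        (FreeAlgebra.ι R i * FreeAlgebra.ι R j * FreeAlgebra.ι R i)
        (FreeAlgebra.ι R j * FreeAlgebra.ι R i * FreeAlgebra.ι R j)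
  | comm (i j : Fin n) (hij : i.1 + 1 < j.1) :
      ArikiKoikeRel R n r q Q
        (FreeAlgebra.ι R i * FreeAlgebra.ι R j)
        (FreeAlgebra.ι R j * FreeAlgebra.ι R i)

/-- the Ariki–Koike algebra `H_{n,r}` over `R` with parameters
`q, Q_1, …, Q_r` (with `q` invertible) -/
abbrev ArikiKoike (R : Type) [CommRing R] (n r : ℕ) (q : Rˣ) (Q : Fin r → R) :=
  RingQuot (ArikiKoikeRel R n r q Q)

/-! ## Corners `e·B·e` at an idempotent -/

/-- an idempotent element of a ring -/
structure IdemElem (B : Type) [Ring B] where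
  e : B
  idem : e * e = e

/-- the corner `{x : B | e x e = x}` of `B` at the idempotent `e`;
for `e = \barφ_Ω` this is the modified Ariki–Koike algebra
`\bar H^p = \barφ_Ω ⬝ \bar S^p ⬝ \barφ_Ω` of type `p` -/
def Corner {B : Type} [Ring B] (E : IdemElem B) := {x : B // E.e * x * E.e = x}

namespace Corner

variable {B : Type} [Ring B] {E : IdemElem B}

instance : Add (Corner E) :=
  ⟨fun x y => ⟨x.1 + y.1, by rw [mul_add, add_mul, x.2, y.2]⟩⟩

instance : Mul (Corner E) :=
  ⟨fun x y => ⟨x.1 * y.1, by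
    have hx : E.e * x.1 = x.1 := by
      nth_rewrite 1 [← x.2]
      rw [← mul_assoc, ← mul_assoc, E.idem, x.2]
    have hy : y.1 * E.e = y.1 := by
      nth_rewrite 1 [← y.2]
      rw [mul_assoc, E.idem, y.2]
    rw [← mul_assoc, hx, mul_assoc, hy]⟩⟩

instance : Zero (Corner E) := ⟨⟨0, by simp⟩⟩

instance : Neg (Corner E) := ⟨fun x => ⟨-x.1, by rw [mul_neg, neg_mul, x.2]⟩⟩

/-- the identity element `e` of the corner -/
def one (E : IdemElem B) : Corner E :=
  ⟨E.e, by rw [E.idem, E.idem]⟩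

instance {R : Type} [CommRing R] [Algebra R B] : SMul R (Corner E) :=
  ⟨fun c x => ⟨c • x.1, by rw [mul_smul_comm, smul_mul_assoc, x.2]⟩⟩

@[simp] theorem add_val (x y : Corner E) : (x + y).1 = x.1 + y.1 := rfl
@[simp] theorem mul_val (x y : Corner E) : (x * y).1 = x.1 * y.1 := rfl
@[simp] theorem smul_val {R : Type} [CommRing R] [Algebra R B] (c : R)
    (x : Corner E) : (c • x).1 = c • x.1 := rfl

end Corner

/-! ## The set `Ω` and the blocks of compositions of `n` -/

section OmegaLayer

variable {n r g : ℕ} {m : Fin r → ℕ}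

/-- `ω ∈ Ω`: all the entries of `ω` are `0` or `1`, for each letter
`1 ≤ i ≤ n` the `i`-th rows of the components of `ω` have total size `1`,
and all nonzero rows occur in components which are last in their `p`-block
(this uses `m_k ≥ n` for all `k`). -/
def IsOmega (P : BlockCtx r g) (hm : ∀ k, n ≤ m k) (om : MultiComp n r m) : Prop :=
  (∀ (k : Fin r) (i : Fin (m k)), om.part k i ≤ 1) ∧
  (∀ i : Fin n,
    (∑ k : Fin r, om.part k ⟨i.1, Nat.lt_of_lt_of_le i.2 (hm k)⟩) = 1) ∧
  (∀ (k : Fin r) (i : Fin (m k)), om.part k i = 1 →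
    ∀ k' : Fin r, P.π k' = P.π k → k' ≤ k)

instance (P : BlockCtx r g) (hm : ∀ k, n ≤ m k) (om : MultiComp n r m) :
    Decidable (IsOmega P hm om) := by
  unfold IsOmega; infer_instance

/-- the set `D_{n,g}` of tuples `(n₁, …, n_g)` of non-negative integers summing
to `n` -/
def DComp (n g : ℕ) := {f : Fin g → ℕ // ∑ b, f b = n}

end OmegaLayer

/-! The `R`-linear map `S(Λ) → \bar S^p` sending `φ_{S,T}` to `\barφ_{S,T}` when
`S, T ∈ T₀^p(λ)` and to `0` otherwise restricts to the projection on `S^p`, intertwines the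
two anti-automorphisms `*` (both swap `S` and `T`), and maps `S(Λ)^{∨λ}` into
`(\bar S^p)^{∨λ}`. Both cellular axioms of `\bar S^p` are therefore images of those of
`S(Λ)`: anti-multiplicativity need only be checked on products `\barφ_{S,T} \barφ_{U,V}`,
which lift to products in `S^p`. The one combinatorial input is that `a_p(μ)` determines
`α_p(μ)`, so every `φ_{S,T}` with `S, T ∈ T₀^p(λ)` lies in `Z^p`. -/

theorem LinearMap.map_mul_rev_of_basis {R A ι : Type*} [CommRing R] [Ring A] [Algebra R A]
    (b : Module.Basis ι R A) (f : A →ₗ[R] A)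
    (h : ∀ i j, f (b i * b j) = f (b j) * f (b i)) (x y : A) :
    f (x * y) = f y * f x := by
  have hbil : (LinearMap.mul R A).compr₂ f = ((LinearMap.mul R A).flip.comp f).compl₂ f :=
    LinearMap.ext_basis b b h
  simpa using LinearMap.congr_fun (LinearMap.congr_fun hbil x) y

namespace BlockCtx

variable {r g : ℕ} (P : BlockCtx r g) {n : ℕ} {m : Fin r → ℕ}

theorem aP_add_alphaP (mu : MultiComp n r m) (b : Fin g) :
    P.aP mu b + P.alphaP mu b = if h : b.1 + 1 < g then P.aP mu ⟨b.1 + 1, h⟩ else n := by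
  have hle : P.aP mu b + P.alphaP mu b =
      ∑ k ∈ Finset.univ.filter fun k => P.π k ≤ b, mu.compSize k := by
    simp only [aP, alphaP, Finset.sum_filter, ← Finset.sum_add_distrib]
    refine Finset.sum_congr rfl fun k _ => ?_
    rcases lt_trichotomy (P.π k) b with hk | hk | hk
    · simp [hk, hk.le, hk.ne]
    · simp [hk]
    · simp [not_lt.2 hk.le, not_le.2 hk, hk.ne']
  rw [hle]
  split_ifs with h
  · simp only [aP]
    refine Finset.sum_congr (Finset.filter_congr fun k _ => ?_) fun _ _ => rfl
    simp only [Fin.le_def, Fin.lt_def]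
    omega
  · rw [Finset.filter_true_of_mem fun k _ => Fin.le_def.2 (by omega)]
    exact mu.sum_eq

theorem alphaP_eq_of_aP_eq {mu nu : MultiComp n r m} (h : P.aP mu = P.aP nu) :
    P.alphaP mu = P.alphaP nu := by
  funext b
  have hmu := P.aP_add_alphaP mu b
  have hnu := P.aP_add_alphaP nu b
  rw [h] at hmu
  omega

end BlockCtx

namespace SchurAlgebra

variable {R : Type} [CommRing R] {n r g : ℕ} {m : Fin r → ℕ} {Λ : Finset (MultiComp n r m)}
variable (SA : SchurAlgebra R Λ)

theorem astar_astar (x : SA.carrier) : SA.astar (SA.astar x) = x := by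
  have h : SA.astar ∘ₗ SA.astar = LinearMap.id :=
    SA.bas.ext fun ⟨lam, mu, nu, S, T⟩ => by simp [SA.astar_bas]
  exact LinearMap.congr_fun h x

theorem astar_mem_sVee {lam : LamP Λ} {x : SA.carrier} (hx : x ∈ SA.SVee lam) :
    SA.astar x ∈ SA.SVee lam := by
  suffices h : (SA.SVee lam).map SA.astar ≤ SA.SVee lam from
    h (Submodule.mem_map_of_mem hx)
  rw [SVee, Submodule.map_span_le]
  rintro _ ⟨lam', mu', nu', S', T', hdom, rfl⟩
  rw [SA.astar_bas]
  exact Submodule.subset_span ⟨lam', nu', mu', T', S', hdom, rfl⟩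

theorem cellular_right (a : SA.carrier) (lam : LamP Λ) (nu : LamS Λ)
    (T : SSTab lam.1 nu.1) :
    ∃ c : TabOf Λ lam → R, ∀ (mu : LamS Λ) (S : SSTab lam.1 mu.1),
      SA.bas ⟨lam, mu, nu, (S, T)⟩ * a -
          ∑ x : TabOf Λ lam, c x • SA.bas ⟨lam, mu, x.1, (S, x.2)⟩ ∈ SA.SVee lam := by
  obtain ⟨c, hc⟩ := SA.cellular (SA.astar a) lam nu T
  refine ⟨c, fun mu S => ?_⟩
  have h := SA.astar_mem_sVee (hc mu S)
  simpa [SA.astar_mul, SA.astar_bas, SA.astar_astar] using h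

theorem bas_mem_of_pCond {P : BlockCtx r g} {Sp : Subalgebra R SA.carrier}
    (hSp : (Sp : Set SA.carrier) = Submodule.span R (SA.ZpSet P))
    (lam : LamP Λ) (S T : PTab P lam) :
    SA.bas ⟨lam, S.1.1, T.1.1, (S.1.2, T.1.2)⟩ ∈ Sp := by
  rw [← SetLike.mem_coe, hSp]
  refine Submodule.subset_span ⟨lam, S.1.1, T.1.1, S.1.2, T.1.2, fun hne => ?_, rfl⟩
  exact absurd (P.alphaP_eq_of_aP_eq (S.2.trans T.2.symm)) hne

end SchurAlgebra

namespace BarSchurAlgebra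

variable {R : Type} [CommRing R] {n r g : ℕ} {m : Fin r → ℕ} {Λ : Finset (MultiComp n r m)}
variable {SA : SchurAlgebra R Λ} {P : BlockCtx r g} {Sp : Subalgebra R SA.carrier}
variable (BA : BarSchurAlgebra SA P Sp)

def projExt : SA.carrier →ₗ[R] BA.B :=
  SA.bas.constr R fun w =>
    if h : pCond P w.1 ⟨w.2.1, w.2.2.2.1⟩ ∧ pCond P w.1 ⟨w.2.2.1, w.2.2.2.2⟩
    then BA.barphi w.1 ⟨⟨w.2.1, w.2.2.2.1⟩, h.1⟩ ⟨⟨w.2.2.1, w.2.2.2.2⟩, h.2⟩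
    else 0

theorem projExt_bas (lam : LamP Λ) (mu nu : LamS Λ) (S : SSTab lam.1 mu.1)
    (T : SSTab lam.1 nu.1) :
    BA.projExt (SA.bas ⟨lam, mu, nu, (S, T)⟩) =
      if h : pCond P lam ⟨mu, S⟩ ∧ pCond P lam ⟨nu, T⟩
      then BA.barphi lam ⟨⟨mu, S⟩, h.1⟩ ⟨⟨nu, T⟩, h.2⟩ else 0 :=
  SA.bas.constr_basis R _ _

theorem projExt_bas_of_pCond (lam : LamP Λ) (S T : PTab P lam) :
    BA.projExt (SA.bas ⟨lam, S.1.1, T.1.1, (S.1.2, T.1.2)⟩) = BA.barphi lam S T := by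
  rw [projExt_bas, dif_pos ⟨S.2, T.2⟩]

theorem projExt_mem_barVee {lam : LamP Λ} {x : SA.carrier} (hx : x ∈ SA.SVee lam) :
    BA.projExt x ∈ BA.BarVee lam := by
  suffices h : (SA.SVee lam).map BA.projExt ≤ BA.BarVee lam from
    h (Submodule.mem_map_of_mem hx)
  rw [SchurAlgebra.SVee, Submodule.map_span_le]
  rintro _ ⟨lam', mu', nu', S', T', hdom, rfl⟩
  rw [projExt_bas]
  split_ifs with h
  · exact Submodule.subset_span ⟨lam', ⟨⟨mu', S'⟩, h.1⟩, ⟨⟨nu', T'⟩, h.2⟩, hdom, rfl⟩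
  · exact zero_mem _

theorem projExt_sum_bas (lam : LamP Λ) (S : PTab P lam) (c : TabOf Λ lam → R) :
    BA.projExt (∑ x : TabOf Λ lam, c x • SA.bas ⟨lam, S.1.1, x.1, (S.1.2, x.2)⟩) =
      ∑ T : PTab P lam, c T.1 • BA.barphi lam S T := by
  simp only [map_sum, map_smul, projExt_bas]
  rw [← Fintype.sum_subtype_add_sum_subtype (pCond P lam)]
  refine (add_eq_left.2 (Finset.sum_eq_zero fun x _ => ?_)).trans
    (Finset.sum_congr rfl fun T _ => ?_)
  · rw [dif_neg fun h => x.2 h.2, smul_zero]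
  · rw [dif_pos ⟨S.2, T.2⟩]

theorem proj_eq_projExt
    (hSp : (Sp : Set SA.carrier) = Submodule.span R (SA.ZpSet P)) (z : Sp) :
    BA.proj z = BA.projExt z := by
  have mem_iff (x : SA.carrier) : x ∈ Sp ↔ x ∈ Submodule.span R (SA.ZpSet P) := by
    rw [← SetLike.mem_coe, hSp, SetLike.mem_coe]
  obtain ⟨z, hz⟩ := z
  induction (mem_iff z).1 hz using Submodule.span_induction with
  | mem x hx =>
    obtain ⟨lam, mu, nu, S, T, -, rfl⟩ := hx
    rw [BA.proj_bas lam mu nu S T _ rfl, projExt_bas]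
  | zero => exact (map_zero BA.proj).trans (map_zero BA.projExt).symm
  | add x y hx hy ihx ihy =>
    have hsum : (⟨x + y, hz⟩ : Sp) = ⟨x, (mem_iff x).2 hx⟩ + ⟨y, (mem_iff y).2 hy⟩ := rfl
    rw [hsum, map_add, ihx, ihy, Subalgebra.coe_add, map_add]
  | smul a x hx ihx =>
    have hsmul : (⟨a • x, hz⟩ : Sp) = a • ⟨x, (mem_iff x).2 hx⟩ := rfl
    rw [hsmul, map_smul, ihx, Subalgebra.coe_smul, map_smul]

theorem projExt_mul (hSp : (Sp : Set SA.carrier) = Submodule.span R (SA.ZpSet P))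
    {x y : SA.carrier} (hx : x ∈ Sp) (hy : y ∈ Sp) :
    BA.projExt (x * y) = BA.projExt x * BA.projExt y := by
  have h := BA.proj_eq_projExt hSp (⟨x, hx⟩ * ⟨y, hy⟩)
  rw [map_mul, BA.proj_eq_projExt hSp, BA.proj_eq_projExt hSp] at h
  exact h.symm

def barStar : BA.B →ₗ[R] BA.B :=
  BA.bbas.constr R fun x => BA.bbas ⟨x.1, (x.2.2, x.2.1)⟩

theorem barStar_barphi (lam : LamP Λ) (S T : PTab P lam) :
    BA.barStar (BA.barphi lam S T) = BA.barphi lam T S := by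
  rw [← BA.bbas_eq, ← BA.bbas_eq, barStar, Module.Basis.constr_basis]

theorem barStar_involutive : Function.Involutive BA.barStar := by
  have h : BA.barStar ∘ₗ BA.barStar = LinearMap.id :=
    BA.bbas.ext fun ⟨lam, S, T⟩ => by simp [BA.bbas_eq, barStar_barphi]
  exact LinearMap.congr_fun h

theorem barStar_projExt (x : SA.carrier) :
    BA.barStar (BA.projExt x) = BA.projExt (SA.astar x) := by
  have h : BA.barStar ∘ₗ BA.projExt = BA.projExt ∘ₗ SA.astar := by
    refine SA.bas.ext fun ⟨lam, mu, nu, S, T⟩ => ?_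
    simp only [LinearMap.comp_apply, SA.astar_bas, projExt_bas]
    split_ifs with hST hTS hTS
    · exact BA.barStar_barphi _ _ _
    · exact absurd hST.symm hTS
    · exact absurd hTS.symm hST
    · exact map_zero _
  exact LinearMap.congr_fun h x

theorem barStar_mul (hSp : (Sp : Set SA.carrier) = Submodule.span R (SA.ZpSet P))
    (x y : BA.B) : BA.barStar (x * y) = BA.barStar y * BA.barStar x := by
  refine LinearMap.map_mul_rev_of_basis BA.bbas _ (fun ⟨lam, S, T⟩ ⟨mu, U, V⟩ => ?_) x y
  have mem := SA.bas_mem_of_pCond hSp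
  simp only [BA.bbas_eq, BA.barStar_barphi]
  simp only [← BA.projExt_bas_of_pCond]
  rw [← BA.projExt_mul hSp (mem _ _ _) (mem _ _ _), barStar_projExt, SA.astar_mul,
    SA.astar_bas, SA.astar_bas, BA.projExt_mul hSp (mem mu V U) (mem lam T S)]

theorem exists_barphi_mul_sub_mem_barVee
    (hSp : (Sp : Set SA.carrier) = Submodule.span R (SA.ZpSet P))
    (lam : LamP Λ) (T : PTab P lam) (b : BA.B) :
    ∃ c : PTab P lam → R, ∀ S : PTab P lam,
      BA.barphi lam S T * b - ∑ T' : PTab P lam, c T' • BA.barphi lam S T' ∈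
        BA.BarVee lam := by
  obtain ⟨a, rfl⟩ := BA.surj b
  obtain ⟨c, hc⟩ := SA.cellular_right a lam T.1.1 T.1.2
  refine ⟨fun T' => c T'.1, fun S => ?_⟩
  have h := BA.projExt_mem_barVee (hc S.1.1 S.1.2)
  rwa [map_sub, BA.projExt_mul hSp (SA.bas_mem_of_pCond hSp lam S T) a.2,
    BA.projExt_bas_of_pCond, ← BA.proj_eq_projExt hSp, projExt_sum_bas] at h

end BarSchurAlgebra

theorem barSp_is_cellular_general
    {R : Type} [CommRing R] {n r g : ℕ} {m : Fin r → ℕ}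
    {Λ : Finset (MultiComp n r m)}
    (SA : SchurAlgebra R Λ) (P : BlockCtx r g)
    (Sp : Subalgebra R SA.carrier)
    (hSp : (Sp : Set SA.carrier) =
      (Submodule.span R (SA.ZpSet P) : Submodule R SA.carrier))
    (BA : BarSchurAlgebra SA P Sp) :
    -- (i) `\barφ_{S,T} ↦ \barφ_{T,S}` extends to an `R`-linear
    -- anti-automorphism `*` of `\bar S^p`
    (∃ bstar : BA.B →ₗ[R] BA.B, Function.Bijective bstar ∧
      (∀ x y : BA.B, bstar (x * y) = bstar y * bstar x) ∧
      ∀ (lam : LamP Λ) (S T : PTab P lam),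
        bstar (BA.barphi lam S T) = BA.barphi lam T S) ∧
    -- (ii) for every `λ ∈ Λ⁺`, `S, T ∈ T₀^p(λ)` and `\barφ ∈ \bar S^p`,
    -- `\barφ_{S,T} ⬝ \barφ ≡ ∑_{T' ∈ T₀^p(λ)} r_{T'} \barφ_{S,T'}
    -- mod (\bar S^p)^{∨λ}`, where `r_{T'}` depends on `λ, T, \barφ` but not on `S`
    (∀ (lam : LamP Λ) (T : PTab P lam) (b : BA.B),
      ∃ c : PTab P lam → R, ∀ S : PTab P lam,
        BA.barphi lam S T * b - ∑ T' : PTab P lam, c T' • BA.barphi lam S T'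
          ∈ BA.BarVee lam) :=
  ⟨⟨BA.barStar, BA.barStar_involutive.bijective, BA.barStar_mul hSp, BA.barStar_barphi⟩,
    BA.exists_barphi_mul_sub_mem_barVee hSp⟩

theorem barSp_is_cellular
    {R : Type} [CommRing R] [IsDomain R] {n r g : ℕ} {m : Fin r → ℕ}
    (hn : 0 < n) (hr : 0 < r) (hm : ∀ k, 0 < m k)
    {Λ : Finset (MultiComp n r m)} (hΛ : Saturated Λ)
    (SA : SchurAlgebra R Λ) (P : BlockCtx r g)
    (Sp : Subalgebra R SA.carrier)
    (hSp : (Sp : Set SA.carrier) =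
      (Submodule.span R (SA.ZpSet P) : Submodule R SA.carrier))
    (BA : BarSchurAlgebra SA P Sp) :
    -- (i) `\barφ_{S,T} ↦ \barφ_{T,S}` extends to an `R`-linear
    -- anti-automorphism `*` of `\bar S^p`
    (∃ bstar : BA.B →ₗ[R] BA.B, Function.Bijective bstar ∧
      (∀ x y : BA.B, bstar (x * y) = bstar y * bstar x) ∧
      ∀ (lam : LamP Λ) (S T : PTab P lam),
        bstar (BA.barphi lam S T) = BA.barphi lam T S) ∧
    -- (ii) for every `λ ∈ Λ⁺`, `S, T ∈ T₀^p(λ)` and `\barφ ∈ \bar S^p`,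
    -- `\barφ_{S,T} ⬝ \barφ ≡ ∑_{T' ∈ T₀^p(λ)} r_{T'} \barφ_{S,T'}
    -- mod (\bar S^p)^{∨λ}`, where `r_{T'}` depends on `λ, T, \barφ` but not on `S`
    (∀ (lam : LamP Λ) (T : PTab P lam) (b : BA.B),
      ∃ c : PTab P lam → R, ∀ S : PTab P lam,
        BA.barphi lam S T * b - ∑ T' : PTab P lam, c T' • BA.barphi lam S T'
          ∈ BA.BarVee lam) :=
  barSp_is_cellular_general SA P Sp hSp BA
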